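/- For all k, ℓ ∈ ℤ² ∖ {(0,0)} and all x ∈ ℝ², with a = (k₂ℓ₁ − k₁ℓ₂)/(|k||ℓ|), one has the expansion 𝒵^{0,1}_{k,ℓ}(x) = (a/2)·cos((k+ℓ)·x)·(−(k₂ + ℓ₂), k₁ + ℓ₁) + (a/2)·cos((k−ℓ)·x)·(k₂ − ℓ₂, ℓ₁ − k₁). -/

import Mathlib

/-- Euclidean norm of an integer vector. -/
noncomputable def znorm (k : ℤ × ℤ) : ℝ := Real.sqrt ((k.1 : ℝ) ^ 2 + (k.2 : ℝ) ^ 2)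

/-- The pairing `k · x = k₁x₁ + k₂x₂`. -/
noncomputable def kdot (k : ℤ × ℤ) (x : ℝ × ℝ) : ℝ := (k.1 : ℝ) * x.1 + (k.2 : ℝ) * x.2

/-- The vector field `e_k^0(x) = (k₂/|k|, −k₁/|k|)·cos(k·x)`. -/
noncomputable def e0 (k : ℤ × ℤ) : ℝ × ℝ → ℝ × ℝ := fun x =>
  (((k.2 : ℝ) / znorm k) * Real.cos (kdot k x), (-(k.1 : ℝ) / znorm k) * Real.cos (kdot k x))

/-- The vector field `e_k^1(x) = (−k₂/|k|, k₁/|k|)·sin(k·x)`. -/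
noncomputable def e1 (k : ℤ × ℤ) : ℝ × ℝ → ℝ × ℝ := fun x =>
  ((-(k.2 : ℝ) / znorm k) * Real.sin (kdot k x), ((k.1 : ℝ) / znorm k) * Real.sin (kdot k x))

/-- The advection `b(u,v) = (u·∇)v`, i.e. the derivative of `v` in the direction `u`. -/
noncomputable def adv (u v : ℝ × ℝ → ℝ × ℝ) : ℝ × ℝ → ℝ × ℝ := fun x => fderiv ℝ v x (u x)

/-- The `L²` pairing `⟨f,g⟩ = ∫_{[−π,π]²} f(x)·g(x) dx`. -/
noncomputable def pairL2 (f g : ℝ × ℝ → ℝ × ℝ) : ℝ :=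
  ∫ x in Set.Icc ((-Real.pi, -Real.pi) : ℝ × ℝ) ((Real.pi, Real.pi) : ℝ × ℝ),
    ((f x).1 * (g x).1 + (f x).2 * (g x).2)

/-- `𝒥^{0,1}_{k,ℓ} = b(e_k^0, e_ℓ^1) + b(e_ℓ^1, e_k^0)`. -/
noncomputable def J01 (k l : ℤ × ℤ) : ℝ × ℝ → ℝ × ℝ := fun x =>
  adv (e0 k) (e1 l) x + adv (e1 l) (e0 k) x

/-- `𝒥^{0,0}_{k,ℓ} = b(e_k^0, e_ℓ^0) + b(e_ℓ^0, e_k^0)`. -/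
noncomputable def J00 (k l : ℤ × ℤ) : ℝ × ℝ → ℝ × ℝ := fun x =>
  adv (e0 k) (e0 l) x + adv (e0 l) (e0 k) x

/-- `𝒥^{1,1}_{k,ℓ} = b(e_k^1, e_ℓ^1) + b(e_ℓ^1, e_k^1)`. -/
noncomputable def J11 (k l : ℤ × ℤ) : ℝ × ℝ → ℝ × ℝ := fun x =>
  adv (e1 k) (e1 l) x + adv (e1 l) (e1 k) x

/-- `𝒵^{0,1}_{k,ℓ} = b(e_k^0, e_ℓ^1) − b(e_ℓ^1, e_k^0)`. -/
noncomputable def Z01 (k l : ℤ × ℤ) : ℝ × ℝ → ℝ × ℝ := fun x =>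
  adv (e0 k) (e1 l) x - adv (e1 l) (e0 k) x

/-- `𝒵^{0,0}_{k,ℓ} = b(e_k^0, e_ℓ^0) − b(e_ℓ^0, e_k^0)`. -/
noncomputable def Z00 (k l : ℤ × ℤ) : ℝ × ℝ → ℝ × ℝ := fun x =>
  adv (e0 k) (e0 l) x - adv (e0 l) (e0 k) x

/-- `𝒵^{1,1}_{k,ℓ} = b(e_k^1, e_ℓ^1) − b(e_ℓ^1, e_k^1)`. -/
noncomputable def Z11 (k l : ℤ × ℤ) : ℝ × ℝ → ℝ × ℝ := fun x =>
  adv (e1 k) (e1 l) x - adv (e1 l) (e1 k) x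

noncomputable def Lk (k : ℤ × ℤ) : (ℝ × ℝ) →L[ℝ] ℝ :=
  (k.1 : ℝ) • ContinuousLinearMap.fst ℝ ℝ ℝ + (k.2 : ℝ) • ContinuousLinearMap.snd ℝ ℝ ℝ

@[simp] lemma Lk_apply (k : ℤ × ℤ) (v : ℝ × ℝ) :
    Lk k v = (k.1 : ℝ) * v.1 + (k.2 : ℝ) * v.2 := by
  simp [Lk]

lemma hasFDerivAt_kdot (k : ℤ × ℤ) (x : ℝ × ℝ) : HasFDerivAt (kdot k) (Lk k) x := by
  have h : kdot k = fun y : ℝ × ℝ => Lk k y := by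
    funext y; simp [kdot]
  rw [h]
  exact (Lk k).hasFDerivAt

lemma hasFDerivAt_mul_cos (c : ℝ) (k : ℤ × ℤ) (x : ℝ × ℝ) :
    HasFDerivAt (fun y => c * Real.cos (kdot k y))
      ((c * -Real.sin (kdot k x)) • Lk k) x := by
  have h := ((hasFDerivAt_kdot k x).cos).const_mul c
  rwa [smul_smul] at h

lemma hasFDerivAt_mul_sin (c : ℝ) (k : ℤ × ℤ) (x : ℝ × ℝ) :
    HasFDerivAt (fun y => c * Real.sin (kdot k y))
      ((c * Real.cos (kdot k x)) • Lk k) x := by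
  have h := ((hasFDerivAt_kdot k x).sin).const_mul c
  rwa [smul_smul] at h

lemma hasFDerivAt_e0 (k : ℤ × ℤ) (x : ℝ × ℝ) :
    HasFDerivAt (e0 k)
      (((((k.2 : ℝ) / znorm k) * -Real.sin (kdot k x)) • Lk k).prod
        (((-(k.1 : ℝ) / znorm k) * -Real.sin (kdot k x)) • Lk k)) x :=
  HasFDerivAt.prodMk (hasFDerivAt_mul_cos _ k x) (hasFDerivAt_mul_cos _ k x)

lemma hasFDerivAt_e1 (k : ℤ × ℤ) (x : ℝ × ℝ) :
    HasFDerivAt (e1 k)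
      (((((-(k.2 : ℝ)) / znorm k) * Real.cos (kdot k x)) • Lk k).prod
        ((((k.1 : ℝ) / znorm k) * Real.cos (kdot k x)) • Lk k)) x :=
  HasFDerivAt.prodMk (hasFDerivAt_mul_sin _ k x) (hasFDerivAt_mul_sin _ k x)

lemma znorm_ne_zero {k : ℤ × ℤ} (hk : k ≠ (0, 0)) : znorm k ≠ 0 := by
  have h : (k.1 : ℝ) ^ 2 + (k.2 : ℝ) ^ 2 > 0 := by
    have : ¬(k.1 = 0 ∧ k.2 = 0) := by simpa [Prod.ext_iff] using hk
    rcases not_and_or.mp this with h1 | h2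
    · have : (k.1 : ℝ) ≠ 0 := Int.cast_ne_zero.mpr h1
      positivity
    · have : (k.2 : ℝ) ≠ 0 := Int.cast_ne_zero.mpr h2
      positivity
  exact ne_of_gt (Real.sqrt_pos.mpr h)

lemma kdot_add (k l : ℤ × ℤ) (x : ℝ × ℝ) : kdot (k + l) x = kdot k x + kdot l x := by
  simp [kdot]; ring

lemma kdot_sub (k l : ℤ × ℤ) (x : ℝ × ℝ) : kdot (k - l) x = kdot k x - kdot l x := by
  simp [kdot]; ring

theorem Z01_expansion (k l : ℤ × ℤ) (hk : k ≠ (0, 0)) (hl : l ≠ (0, 0))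
    (a : ℝ) (ha : a = ((k.2 : ℝ) * (l.1 : ℝ) - (k.1 : ℝ) * (l.2 : ℝ)) / (znorm k * znorm l))
    (x : ℝ × ℝ) :
    Z01 k l x =
      ((a / 2) * Real.cos (kdot (k + l) x) * (-((k.2 : ℝ) + (l.2 : ℝ))),
       (a / 2) * Real.cos (kdot (k + l) x) * ((k.1 : ℝ) + (l.1 : ℝ))) +
      ((a / 2) * Real.cos (kdot (k - l) x) * ((k.2 : ℝ) - (l.2 : ℝ)),
       (a / 2) * Real.cos (kdot (k - l) x) * ((l.1 : ℝ) - (k.1 : ℝ))) := by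
  have h1 := (hasFDerivAt_e1 l x).fderiv
  have h2 := (hasFDerivAt_e0 k x).fderiv
  have hnk := znorm_ne_zero hk
  have hnl := znorm_ne_zero hl
  simp only [Z01, adv, h1, h2, ContinuousLinearMap.prod_apply,
    ContinuousLinearMap.coe_smul', Pi.smul_apply, Lk_apply, e0, e1, smul_eq_mul,
    kdot_add, kdot_sub, Real.cos_add, Real.cos_sub, ha]
  have hs := Real.sin_sq_add_cos_sq (kdot k x)
  ext <;> simp only [Prod.fst_add, Prod.snd_add, Prod.mk_sub_mk, Prod.fst_sub, Prod.snd_sub] <;>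
    field_simp <;> ring
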